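/- (Correctness of the joint valuation algorithm.) Let agents 1, …, n (n ≥ 1) have valuation functions V_1, …, V_n and let m be a cap vector. Then max_{a ≤ m} (V_1 ⊕ V_2 ⊕ ⋯ ⊕ V_n)(a) = OPT({1, …, n}, m); i.e., the maximum of the iterated joint valuation function over allocation vectors bounded by m equals the maximal social welfare. -/

import Mathlib

/-- An allocation `A` for the agents in `G` is *valid* with cap `m` if the
element-wise sum of the allocated vectors does not exceed `m`. -/
def Valid (R : ℕ) {ι : Type*} (G : Finset ι) (m : Fin R → ℕ)
    (A : ι → Fin R → ℕ) : Prop :=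
  ∑ i ∈ G, A i ≤ m

/-- The social welfare of the allocation `A` on the agent set `G`. -/
def SW (R : ℕ) {ι : Type*} (V : ι → (Fin R → ℕ) → ℝ) (G : Finset ι)
    (A : ι → Fin R → ℕ) : ℝ :=
  ∑ i ∈ G, V i (A i)

/-- `OPT R V G m` : the maximal social welfare over all valid allocations
for the agents in `G` with cap `m`. -/
noncomputable def OPT (R : ℕ) {ι : Type*} (V : ι → (Fin R → ℕ) → ℝ)
    (G : Finset ι) (m : Fin R → ℕ) : ℝ :=
  sSup {w : ℝ | ∃ A : ι → Fin R → ℕ, Valid R G m A ∧ SW R V G A = w}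

/-- The joint valuation of `V` and `W`:
`(V ⊕ W)(a) = max_{b ≤ a} (V b + W (a - b))` (truncated subtraction). -/
noncomputable def join (R : ℕ) (V W : (Fin R → ℕ) → ℝ) : (Fin R → ℕ) → ℝ :=
  fun a => sSup {w : ℝ | ∃ b ≤ a, V b + W (a - b) = w}

/-- The iterated join `V₁ ⊕ V₂ ⊕ ⋯ ⊕ Vₙ` of a list of valuation functions
(the empty join is the zero function). -/
noncomputable def joinIter (R : ℕ) :
    List ((Fin R → ℕ) → ℝ) → ((Fin R → ℕ) → ℝ)
  | [] => fun _ => 0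
  | V :: rest => rest.foldl (join R) V

/-!
Induct on the number of agents, with the invariant that the maximum of `J = V₁ ⊕ ⋯ ⊕ Vₙ`
below any cap `b` is `OPT({1, …, n}, b)`. Both `max_{a ≤ m} (J ⊕ W)(a)` and
`OPT({1, …, n+1}, m)` are then the maximum of `J b + W c` over `b + c ≤ m`: an allocation of
the first `n` agents within `b` together with `c` for the last agent is valid with cap `m`,
and conversely every valid allocation splits this way with `b` the sum of the first `n`
vectors.
-/

section CapMax

variable {α : Type*} [Preorder α]

noncomputable def capMax (F : α → ℝ) (m : α) : ℝ :=
  sSup {w : ℝ | ∃ a ≤ m, F a = w}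

theorem le_capMax [LocallyFiniteOrderBot α] (F : α → ℝ) {a m : α} (h : a ≤ m) :
    F a ≤ capMax F m := by
  refine le_csSup ?_ ⟨a, h, rfl⟩
  refine ((Set.finite_Iic m).image F).bddAbove.mono ?_
  rintro _ ⟨b, hb, rfl⟩
  exact ⟨b, hb, rfl⟩

theorem capMax_le {F : α → ℝ} {m : α} {w : ℝ} (h : ∀ a ≤ m, F a ≤ w) : capMax F m ≤ w :=
  csSup_le ⟨F m, m, le_rfl, rfl⟩ (by rintro _ ⟨a, ha, rfl⟩; exact h a ha)

theorem capMax_const [LocallyFiniteOrderBot α] (c : ℝ) (m : α) : capMax (fun _ => c) m = c :=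
  le_antisymm (capMax_le fun _ _ => le_rfl) (le_capMax (fun _ => c) le_rfl)

end CapMax

section Join

variable {R : ℕ} {F W : (Fin R → ℕ) → ℝ}

theorem join_eq_capMax (a : Fin R → ℕ) :
    join R F W a = capMax (fun b => F b + W (a - b)) a :=
  rfl

theorem add_le_join (b c : Fin R → ℕ) : F b + W c ≤ join R F W (b + c) := by
  simpa [join_eq_capMax] using
    le_capMax (fun b' => F b' + W (b + c - b')) (le_add_right le_rfl : b ≤ b + c)

theorem join_le {a : Fin R → ℕ} {w : ℝ} (h : ∀ b ≤ a, F b + W (a - b) ≤ w) :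
    join R F W a ≤ w :=
  capMax_le h

theorem joinIter_concat {l : List ((Fin R → ℕ) → ℝ)} (hl : l ≠ []) (W : (Fin R → ℕ) → ℝ) :
    joinIter R (l.concat W) = join R (joinIter R l) W := by
  obtain ⟨V, l, rfl⟩ := List.exists_cons_of_ne_nil hl
  simp [joinIter]

end Join

section OPT

variable {R : ℕ} {ι : Type*} {V : ι → (Fin R → ℕ) → ℝ} {G : Finset ι} {m : Fin R → ℕ}

theorem SW_le_sum_capMax {A : ι → Fin R → ℕ} (hA : Valid R G m A) :
    SW R V G A ≤ ∑ i ∈ G, capMax (V i) m :=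
  Finset.sum_le_sum fun i hi =>
    le_capMax (V i) ((Finset.single_le_sum (fun _ _ => zero_le) hi).trans hA)

theorem le_OPT {A : ι → Fin R → ℕ} (hA : Valid R G m A) : SW R V G A ≤ OPT R V G m := by
  refine le_csSup ⟨∑ i ∈ G, capMax (V i) m, ?_⟩ ⟨A, hA, rfl⟩
  rintro _ ⟨A', hA', rfl⟩
  exact SW_le_sum_capMax hA'

theorem OPT_le {w : ℝ} (h : ∀ A, Valid R G m A → SW R V G A ≤ w) : OPT R V G m ≤ w := by
  refine csSup_le ⟨SW R V G 0, 0, ?_, rfl⟩ (by rintro _ ⟨A, hA, rfl⟩; exact h A hA)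
  simp [Valid]

theorem OPT_empty (V : ι → (Fin R → ℕ) → ℝ) (m : Fin R → ℕ) : OPT R V ∅ m = 0 :=
  le_antisymm (OPT_le fun _ _ => by simp [SW])
    (by simpa [SW] using le_OPT (V := V) (G := ∅) (m := m) (A := 0) (by simp [Valid]))

end OPT

section LastAgent

variable {R n : ℕ}

theorem SW_univ_castSucc (V : Fin (n + 1) → (Fin R → ℕ) → ℝ) (A : Fin (n + 1) → Fin R → ℕ) :
    SW R V Finset.univ A =
      SW R (fun i : Fin n => V i.castSucc) Finset.univ (fun i : Fin n => A i.castSucc) +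
        V (Fin.last n) (A (Fin.last n)) :=
  Fin.sum_univ_castSucc _

theorem valid_univ_iff_castSucc {m : Fin R → ℕ} {A : Fin (n + 1) → Fin R → ℕ} :
    Valid R Finset.univ m A ↔ ∑ i : Fin n, A i.castSucc + A (Fin.last n) ≤ m := by
  rw [Valid, Fin.sum_univ_castSucc]

theorem OPT_castSucc_add_le (V : Fin (n + 1) → (Fin R → ℕ) → ℝ) {b c m : Fin R → ℕ}
    (h : b + c ≤ m) :
    OPT R (fun i : Fin n => V i.castSucc) Finset.univ b + V (Fin.last n) c ≤
      OPT R V Finset.univ m := by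
  rw [← le_sub_iff_add_le]
  refine OPT_le fun A hA => le_sub_iff_add_le.mpr ?_
  have hvalid : Valid R Finset.univ m (Fin.snoc A c) := by
    rw [valid_univ_iff_castSucc]
    simpa using (add_le_add_left hA c).trans h
  simpa [SW_univ_castSucc] using le_OPT (V := V) hvalid

theorem capMax_add_le_capMax_join {J W : (Fin R → ℕ) → ℝ} {b c m : Fin R → ℕ}
    (h : b + c ≤ m) : capMax J b + W c ≤ capMax (join R J W) m := by
  rw [← le_sub_iff_add_le]
  refine capMax_le fun a ha => le_sub_iff_add_le.mpr ?_
  exact (add_le_join a c).trans (le_capMax _ ((add_le_add_left ha c).trans h))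

theorem capMax_join_eq_OPT (V : Fin (n + 1) → (Fin R → ℕ) → ℝ) {J : (Fin R → ℕ) → ℝ}
    (hJ : ∀ b, capMax J b = OPT R (fun i : Fin n => V i.castSucc) Finset.univ b)
    (m : Fin R → ℕ) :
    capMax (join R J (V (Fin.last n))) m = OPT R V Finset.univ m := by
  apply le_antisymm
  · refine capMax_le fun a ha => join_le fun b hb => ?_
    calc J b + V (Fin.last n) (a - b)
        ≤ capMax J b + V (Fin.last n) (a - b) := add_le_add_left (le_capMax J le_rfl) _
      _ ≤ OPT R V Finset.univ m := by
        rw [hJ]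
        exact OPT_castSucc_add_le V ((add_tsub_cancel_of_le hb).trans_le ha)
  · refine OPT_le fun A hA => ?_
    rw [valid_univ_iff_castSucc] at hA
    calc SW R V Finset.univ A
        = SW R (fun i : Fin n => V i.castSucc) Finset.univ (fun i : Fin n => A i.castSucc) +
            V (Fin.last n) (A (Fin.last n)) := SW_univ_castSucc V A
      _ ≤ capMax J (∑ i : Fin n, A i.castSucc) + V (Fin.last n) (A (Fin.last n)) := by
        rw [hJ]
        exact add_le_add_left (le_OPT le_rfl) _
      _ ≤ capMax (join R J (V (Fin.last n))) m := capMax_add_le_capMax_join hA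

end LastAgent

theorem capMax_joinIter_ofFn_eq_OPT {R n : ℕ} (V : Fin (n + 1) → (Fin R → ℕ) → ℝ)
    (m : Fin R → ℕ) :
    capMax (joinIter R (List.ofFn V)) m = OPT R V Finset.univ m := by
  induction n generalizing m with
  | zero =>
    refine le_antisymm (capMax_le fun a ha => ?_) (OPT_le fun A hA => ?_)
    · have hvalid : Valid R Finset.univ m (fun _ : Fin 1 => a) := by simpa [Valid] using ha
      simpa [SW, joinIter] using le_OPT (V := V) hvalid
    · simpa [SW, joinIter] using le_capMax (V 0) (by simpa [Valid] using hA : A 0 ≤ m)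
  | succ n ih =>
    rw [List.ofFn_succ', joinIter_concat (by simp)]
    exact capMax_join_eq_OPT V (ih _) m

theorem joinIter_correct_general (R n : ℕ)
    (V : Fin n → (Fin R → ℕ) → ℝ) (m : Fin R → ℕ) :
    sSup {w : ℝ | ∃ a ≤ m, joinIter R (List.ofFn V) a = w} =
      OPT R V (Finset.univ : Finset (Fin n)) m := by
  cases n with
  | zero =>
    rw [Finset.univ_eq_empty, OPT_empty]
    exact capMax_const 0 m
  | succ n => exact capMax_joinIter_ofFn_eq_OPT V m

/-- Correctness of the joint valuation algorithm: the maximum of the iterated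
joint valuation `V₁ ⊕ ⋯ ⊕ Vₙ` over allocation vectors bounded by `m` equals
the maximal social welfare `OPT({1, …, n}, m)`. -/
theorem joinIter_correct (R n : ℕ) (hn : 1 ≤ n)
    (V : Fin n → (Fin R → ℕ) → ℝ) (m : Fin R → ℕ) :
    sSup {w : ℝ | ∃ a ≤ m, joinIter R (List.ofFn V) a = w} =
      OPT R V (Finset.univ : Finset (Fin n)) m :=
  joinIter_correct_general R n V m
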